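/- arXiv:1407.3597 — 3 statements merged into one kernel-verified Lean document; each statement's English description precedes it below -/
import Mathlib

section
/- Suppose x : ℝ → ℝ is twice differentiable with x'(t) ≠ 1 for all t, x solves the equation (E), x(0) = a with |a| < π/2, x'(0) = b with b < 1/2, and |a| + |b| > 0. Set c = (2b − 1)cos²a/(1 − b)². Then c ∈ (−1, 0), and for all t ∈ ℝ one has cos²(x(t)) ≥ −c and −√(1+c)/(1 − √(1+c)) ≤ x'(t) ≤ √(1+c)/(1 + √(1+c)). -/
/-!
The quantity `(cos x · x' / (1 - x'))² - cos² x` is a first integral of (E), so it keeps its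
initial value `c` along the solution. Since `x'` never crosses `1` and starts below it, `x' < 1`
throughout, and the conserved identity `cos² x · x'² = (cos² x + c)(1 - x')²` forces
`cos² x ≥ -c` and, because `c < 0` and `cos² x ≤ 1`, also `x'² ≤ (1 + c)(1 - x')²`, which is the
two-sided bound on `x'`.
-/

open Real Set

theorem forall_lt_of_forall_ne {X α : Type*} [TopologicalSpace X] [PreconnectedSpace X]
    [LinearOrder α] [TopologicalSpace α] [OrderClosedTopology α] {f : X → α} (hf : Continuous f)
    {x₀ : X} {y : α} (h₀ : f x₀ < y) (hne : ∀ x, f x ≠ y) (x : X) : f x < y := by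
  by_contra! hle
  obtain ⟨z, hz⟩ := intermediate_value_univ x₀ x hf ⟨h₀.le, hle⟩
  exact hne z hz

noncomputable def orbitEnergy (p v : ℝ) : ℝ := (cos p * v / (1 - v)) ^ 2 - cos p ^ 2

theorem orbitEnergy_eq {v : ℝ} (hv : v ≠ 1) (p : ℝ) :
    orbitEnergy p v = (2 * v - 1) * cos p ^ 2 / (1 - v) ^ 2 := by
  have : 1 - v ≠ 0 := sub_ne_zero.mpr hv.symm
  unfold orbitEnergy
  field_simp
  ring

theorem sq_cos_mul_eq_of_orbitEnergy_eq {p v c : ℝ} (hv : v ≠ 1) (h : orbitEnergy p v = c) :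
    (cos p * v) ^ 2 = (cos p ^ 2 + c) * (1 - v) ^ 2 := by
  have : 1 - v ≠ 0 := sub_ne_zero.mpr hv.symm
  rw [← h, orbitEnergy]
  field_simp
  ring

theorem cos_mul_eq_of_ode {p v w : ℝ} (hv : v ≠ 1)
    (h : cos p * w / (1 - v) ^ 2 - sin p * v / (1 - v) = -sin p) :
    cos p * w = sin p * (1 - v) * (2 * v - 1) := by
  have : 1 - v ≠ 0 := sub_ne_zero.mpr hv.symm
  field_simp at h
  linear_combination h

theorem hasDerivAt_orbitEnergy_comp {x x' : ℝ → ℝ} {t w : ℝ} (hx : HasDerivAt x (x' t) t)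
    (hx' : HasDerivAt x' w t) (hv : x' t ≠ 1)
    (hode : cos (x t) * w = sin (x t) * (1 - x' t) * (2 * x' t - 1)) :
    HasDerivAt (fun s => orbitEnergy (x s) (x' s)) 0 t := by
  have : 1 - x' t ≠ 0 := sub_ne_zero.mpr hv.symm
  have hcos := hx.cos
  have hq := (hcos.mul hx').div (hx'.const_sub 1) this
  refine ((hq.pow 2).sub (hcos.pow 2)).congr_deriv ?_
  norm_num only [Pi.mul_apply, Pi.div_apply]
  field_simp
  linear_combination (2 * cos (x t) * x' t) * hode

theorem orbitEnergy_eq_of_ode {x : ℝ → ℝ} (hx1 : Differentiable ℝ x)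
    (hx2 : Differentiable ℝ (deriv x)) (hne : ∀ t, deriv x t ≠ 1)
    (heq : ∀ t, cos (x t) * deriv (deriv x) t / (1 - deriv x t) ^ 2
      - sin (x t) * deriv x t / (1 - deriv x t) = -sin (x t)) (t s : ℝ) :
    orbitEnergy (x t) (deriv x t) = orbitEnergy (x s) (deriv x s) := by
  have hE : ∀ t, HasDerivAt (fun s => orbitEnergy (x s) (deriv x s)) 0 t := fun t =>
    hasDerivAt_orbitEnergy_comp (hx1 t).hasDerivAt (hx2 t).hasDerivAt (hne t)
      (cos_mul_eq_of_ode (hne t) (heq t))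
  exact is_const_of_deriv_eq_zero (fun t => (hE t).differentiableAt) (fun t => (hE t).deriv) t s

theorem orbitEnergy_mem_Ioo {a b : ℝ} (ha : |a| < π / 2) (hb : b < 1 / 2) (hab : 0 < |a| + |b|) :
    orbitEnergy a b ∈ Ioo (-1) 0 := by
  obtain ⟨ha₁, ha₂⟩ := abs_lt.mp ha
  have hcos : 0 < cos a := cos_pos_of_mem_Ioo ⟨ha₁, ha₂⟩
  have hden : 0 < (1 - b) ^ 2 := pow_pos (by linarith) 2
  -- `(1 - b)² + (2b - 1) cos² a = (1 - 2b) sin² a + b²`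
  have hsum : 0 < (1 - 2 * b) * sin a ^ 2 + b ^ 2 := by
    rcases eq_or_ne b 0 with rfl | hb0
    · have ha0 : a ≠ 0 := by simpa using hab
      have hsin : sin a ≠ 0 :=
        mt (sin_eq_zero_iff_of_lt_of_lt (by linarith [pi_pos]) (by linarith [pi_pos])).mp ha0
      simpa using sq_pos_of_ne_zero hsin
    · nlinarith [sq_nonneg (sin a), sq_pos_of_ne_zero hb0]
  rw [orbitEnergy_eq (by linarith), mem_Ioo, lt_div_iff₀ hden, div_lt_iff₀ hden]
  constructor
  · nlinarith [sin_sq_add_cos_sq a]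
  · nlinarith [mul_pos (by linarith : 0 < 1 - 2 * b) (pow_pos hcos 2)]

theorem neg_le_cos_sq_of_orbitEnergy_eq {p v c : ℝ} (hv : v ≠ 1) (h : orbitEnergy p v = c) :
    -c ≤ cos p ^ 2 := by
  have hK := sq_cos_mul_eq_of_orbitEnergy_eq hv h
  have hpos : 0 < (1 - v) ^ 2 := sq_pos_of_ne_zero (sub_ne_zero.mpr hv.symm)
  have := nonneg_of_mul_nonneg_left (hK ▸ sq_nonneg (cos p * v)) hpos
  linarith

theorem sq_le_of_orbitEnergy_eq {p v c : ℝ} (hv : v ≠ 1) (hc : c < 0) (h : orbitEnergy p v = c) :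
    v ^ 2 ≤ (1 + c) * (1 - v) ^ 2 := by
  have hK := sq_cos_mul_eq_of_orbitEnergy_eq hv h
  have hcos : 0 < cos p ^ 2 := by linarith [neg_le_cos_sq_of_orbitEnergy_eq hv h]
  have hid : cos p ^ 2 * (v ^ 2 - (1 + c) * (1 - v) ^ 2) = c * (1 - v) ^ 2 * (1 - cos p ^ 2) := by
    linear_combination hK
  have hrhs : c * (1 - v) ^ 2 * (1 - cos p ^ 2) ≤ 0 :=
    mul_nonpos_of_nonpos_of_nonneg (mul_nonpos_of_nonpos_of_nonneg hc.le (sq_nonneg _))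
      (sub_nonneg.mpr (cos_sq_le_one p))
  nlinarith

theorem mem_Icc_of_sq_le_sq_mul {v s : ℝ} (hs0 : 0 ≤ s) (hs : s < 1) (hv : v < 1)
    (h : v ^ 2 ≤ s ^ 2 * (1 - v) ^ 2) : v ∈ Icc (-s / (1 - s)) (s / (1 + s)) := by
  obtain ⟨hlo, hhi⟩ := abs_le_of_sq_le_sq' (a := v) (b := s * (1 - v)) (by rwa [mul_pow])
    (mul_nonneg hs0 (sub_nonneg.mpr hv.le))
  rw [mem_Icc, div_le_iff₀ (by linarith), le_div_iff₀ (by linarith)]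
  constructor <;> linarith

/-- Under the hypotheses of the periodic case `b < 1/2`, the energy constant
`c = (2b - 1) cos² a / (1 - b)²` lies in `(-1, 0)`, and for all `t` one has
`cos²(x t) ≥ -c` and `-√(1+c)/(1 - √(1+c)) ≤ x'(t) ≤ √(1+c)/(1 + √(1+c))`. -/
theorem bounded_orbit_bounds (x : ℝ → ℝ) (a b c : ℝ)
    (hx1 : Differentiable ℝ x) (hx2 : Differentiable ℝ (deriv x))
    (hne : ∀ t : ℝ, deriv x t ≠ 1)
    (heq : ∀ t : ℝ,
      Real.cos (x t) * deriv (deriv x) t / (1 - deriv x t) ^ 2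
        - Real.sin (x t) * deriv x t / (1 - deriv x t) = - Real.sin (x t))
    (ha : x 0 = a) (haa : |a| < Real.pi / 2)
    (hb : deriv x 0 = b) (hbb : b < 1 / 2)
    (hab : |a| + |b| > 0)
    (hc : c = (2 * b - 1) * Real.cos a ^ 2 / (1 - b) ^ 2) :
    (-1 < c ∧ c < 0) ∧
      ∀ t : ℝ,
        Real.cos (x t) ^ 2 ≥ -c ∧
        -Real.sqrt (1 + c) / (1 - Real.sqrt (1 + c)) ≤ deriv x t ∧
        deriv x t ≤ Real.sqrt (1 + c) / (1 + Real.sqrt (1 + c)) := by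
  have hlt : ∀ t, deriv x t < 1 :=
    forall_lt_of_forall_ne hx2.continuous (x₀ := 0) (by linarith) hne
  have hc₀ : orbitEnergy a b = c := by rw [hc, orbitEnergy_eq (by linarith)]
  have hE : ∀ t, orbitEnergy (x t) (deriv x t) = c := fun t => by
    rw [orbitEnergy_eq_of_ode hx1 hx2 hne heq t 0, ha, hb, hc₀]
  obtain ⟨hc_gt, hc_lt⟩ : c ∈ Ioo (-1) 0 := hc₀ ▸ orbitEnergy_mem_Ioo haa hbb hab
  refine ⟨⟨hc_gt, hc_lt⟩, fun t => ⟨neg_le_cos_sq_of_orbitEnergy_eq (hne t) (hE t), ?_⟩⟩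
  have hs : √(1 + c) ^ 2 = 1 + c := sq_sqrt (by linarith)
  exact mem_Icc_of_sq_le_sq_mul (sqrt_nonneg _) ((sqrt_lt' one_pos).mpr (by linarith)) (hlt t)
    (hs.symm ▸ sq_le_of_orbitEnergy_eq (hne t) hc_lt (hE t))
end

section
/- Suppose b < 1/2. Then v is continuous and periodic of period 2π and its integral over one period vanishes: ∫₀^{2π} v(t) dt = 0. -/
/-! With `w = 2(1 - b)` and `p = -B + A i` we have `D t = ‖w e^{it} - p‖²`, and
`w² - ‖p‖² = 4(1 - 2b) cos² a > 0`. Hence `p` lies in the disc of radius `w` and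
`v = 1/2 - P/2`, where `P` is the Poisson kernel of that disc at `p` evaluated on its boundary
circle. By the Poisson formula for the constant harmonic function `1`, `P` has mean `1` over the
circle, so `v` has mean `0`. -/

open intervalIntegral Real

theorem sq_norm_circleMap_sub (p : ℂ) (R t : ℝ) :
    ‖circleMap 0 R t - p‖ ^ 2 = R ^ 2 - 2 * R * (p.re * cos t + p.im * sin t) + ‖p‖ ^ 2 := by
  simp only [← Complex.normSq_eq_norm_sq, Complex.normSq_apply, circleMap, zero_add,
    Complex.sub_re, Complex.sub_im, Complex.mul_re, Complex.mul_im, Complex.ofReal_re,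
    Complex.ofReal_im, Complex.exp_ofReal_mul_I_re, Complex.exp_ofReal_mul_I_im, zero_mul,
    sub_zero, add_zero]
  linear_combination R ^ 2 * sin_sq_add_cos_sq t

theorem circleMap_sub_ne_zero {p : ℂ} {R : ℝ} (hp : ‖p‖ < R) (t : ℝ) :
    circleMap 0 R t - p ≠ 0 :=
  sub_ne_zero.mpr (circleMap_ne_mem_ball (by simpa using hp) t)

theorem integral_poissonKernel_circleMap {p : ℂ} {R : ℝ} (hp : ‖p‖ < R) :
    ∫ t in (0:ℝ)..2 * π, poissonKernel 0 p (circleMap 0 R t) = 2 * π := by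
  have h := InnerProductSpace.HarmonicOnNhd.circleAverage_poissonKernel_smul (c := 0) (R := R)
    (InnerProductSpace.harmonicOnNhd_const (1 : ℝ)) (by simpa using hp)
  rw [Real.circleAverage_def, smul_eq_mul, inv_mul_eq_iff_eq_mul₀ (by positivity)] at h
  simpa using h

theorem integral_inv_sq_norm_circleMap_sub {p : ℂ} {R : ℝ} (hp : ‖p‖ < R) :
    ∫ t in (0:ℝ)..2 * π, (‖circleMap 0 R t - p‖ ^ 2)⁻¹ = 2 * π / (R ^ 2 - ‖p‖ ^ 2) := by
  have hR : 0 < R ^ 2 - ‖p‖ ^ 2 := by nlinarith [norm_nonneg p]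
  rw [eq_div_iff hR.ne', mul_comm, ← intervalIntegral.integral_const_mul]
  refine .trans (intervalIntegral.integral_congr fun t _ => ?_)
    (integral_poissonKernel_circleMap hp)
  simp [poissonKernel_def, div_eq_mul_inv, abs_of_pos (hp.trans_le' (norm_nonneg p))]

theorem integral_add_div_sq_norm_circleMap_sub {p : ℂ} {R : ℝ} (hp : ‖p‖ < R) (c d : ℝ) :
    ∫ t in (0:ℝ)..2 * π, (c + d / ‖circleMap 0 R t - p‖ ^ 2)
      = 2 * π * c + 2 * π * d / (R ^ 2 - ‖p‖ ^ 2) := by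
  have hint : Continuous fun t => (‖circleMap 0 R t - p‖ ^ 2)⁻¹ :=
    Continuous.inv₀ (by fun_prop) fun t =>
      pow_ne_zero 2 (norm_ne_zero_iff.mpr (circleMap_sub_ne_zero hp t))
  simp_rw [div_eq_mul_inv d]
  rw [integral_add intervalIntegrable_const ((hint.intervalIntegrable _ _).const_mul d),
    intervalIntegral.integral_const_mul, integral_inv_sq_norm_circleMap_sub hp,
    intervalIntegral.integral_const, smul_eq_mul]
  ring

theorem sin_two_mul_sq_add_add_cos_two_mul_sq (a c : ℝ) :
    sin (2 * a) ^ 2 + (c + cos (2 * a)) ^ 2 = (1 - c) ^ 2 + 4 * c * cos a ^ 2 := by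
  linear_combination sin_sq_add_cos_sq (2 * a) + 2 * c * cos_two_mul a

theorem v_average_zero_general (a b : ℝ)
    (ha : |a| < Real.pi / 2) (hbb : b < 1 / 2)
    (A B : ℝ) (hA : A = Real.sin (2 * a)) (hB : B = 2 * b - 1 + Real.cos (2 * a))
    (D v : ℝ → ℝ)
    (hD : ∀ t : ℝ, D t =
      A ^ 2 + B ^ 2 + 4 * (1 - b) * (B * Real.cos t - A * Real.sin t)
        + 4 * (1 - b) ^ 2)
    (hv : ∀ t : ℝ, v t = 1 / 2 + 2 * (2 * b - 1) * Real.cos a ^ 2 / D t) :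
    Continuous v ∧ (∀ t : ℝ, v (t + 2 * Real.pi) = v t) ∧
      (∫ t in (0:ℝ)..(2 * Real.pi), v t) = 0 := by
  set p : ℂ := ⟨-B, A⟩
  have hp_sq : ‖p‖ ^ 2 = A ^ 2 + B ^ 2 := by
    rw [Complex.sq_norm, Complex.normSq_mk]; ring
  have hgap : (2 * (1 - b)) ^ 2 - ‖p‖ ^ 2 = 4 * (1 - 2 * b) * cos a ^ 2 := by
    rw [hp_sq, hA, hB, sin_two_mul_sq_add_add_cos_two_mul_sq]; ring
  have hgap_pos : 0 < (2 * (1 - b)) ^ 2 - ‖p‖ ^ 2 := by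
    have := cos_pos_of_mem_Ioo (abs_lt.mp ha)
    have : 0 < 1 - 2 * b := by linarith
    rw [hgap]; positivity
  have hp : ‖p‖ < 2 * (1 - b) := by nlinarith [norm_nonneg p]
  have hD_eq : ∀ t, D t = ‖circleMap 0 (2 * (1 - b)) t - p‖ ^ 2 := fun t => by
    rw [hD, sq_norm_circleMap_sub, hp_sq]; ring
  have hD_ne : ∀ t, D t ≠ 0 := fun t => by
    rw [hD_eq]; exact pow_ne_zero 2 (norm_ne_zero_iff.mpr (circleMap_sub_ne_zero hp t))
  have hD_cont : Continuous D := by rw [funext hD]; fun_prop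
  refine ⟨?_, fun t => by simp only [hv, hD, cos_add_two_pi, sin_add_two_pi], ?_⟩
  · rw [funext hv]; exact continuous_const.add (continuous_const.div hD_cont hD_ne)
  · simp_rw [hv, hD_eq]
    rw [integral_add_div_sq_norm_circleMap_sub hp,
      show 2 * (2 * b - 1) * cos a ^ 2 = -((2 * (1 - b)) ^ 2 - ‖p‖ ^ 2) / 2 by rw [hgap]; ring]
    generalize (2 * (1 - b)) ^ 2 - ‖p‖ ^ 2 = κ at hgap_pos
    field_simp
    ring

/-- For `b < 1/2`: with `A = sin 2a`, `B = 2b - 1 + cos 2a`,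
`D t = A² + B² + 4(1-b)(B cos t - A sin t) + 4(1-b)²` and
`v t = 1/2 + 2(2b-1) cos² a / D t`, the function `v` is continuous,
`2π`-periodic, and its integral over one period vanishes. -/
theorem v_average_zero (a b : ℝ)
    (ha : |a| < Real.pi / 2) (hb2 : b ≠ 1 / 2) (hb1 : b ≠ 1)
    (hab : |a| + |b| > 0) (hbb : b < 1 / 2)
    (A B : ℝ) (hA : A = Real.sin (2 * a)) (hB : B = 2 * b - 1 + Real.cos (2 * a))
    (D v : ℝ → ℝ)
    (hD : ∀ t : ℝ, D t =
      A ^ 2 + B ^ 2 + 4 * (1 - b) * (B * Real.cos t - A * Real.sin t)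
        + 4 * (1 - b) ^ 2)
    (hv : ∀ t : ℝ, v t = 1 / 2 + 2 * (2 * b - 1) * Real.cos a ^ 2 / D t) :
    Continuous v ∧ (∀ t : ℝ, v (t + 2 * Real.pi) = v t) ∧
      (∫ t in (0:ℝ)..(2 * Real.pi), v t) = 0 :=
  v_average_zero_general a b ha hbb A B hA hB D v hD hv
end

section
/- Suppose b > 1/2 and b ≠ 1. Then v is continuous and periodic of period 2π and ∫₀^{2π} v(t) dt = 2π; that is, the average of v over one period equals 1. -/
/-! Write `r = 2(1 - b)`, `g t = B cos t - A sin t`, `h t = B sin t + A cos t`, so that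
`g² + h² = A² + B²` and `D = A² + B² + 2 r g + r²`. Since `A² + B² = r² + 4(2b - 1) cos² a`,
`v = (A² + B² + r g) / D` is the average of `1` and the Poisson kernel
`(A² + B² - r²) / D` of the disc of radius `√(A² + B²)` at a point at distance `|r|` from the
centre, which lies inside because `b > 1/2`. Instead of appealing to the Poisson formula we use
the explicit primitive `t - arctan (r h / (A² + B² + r g))`: its denominator stays positive, so it
gains exactly `2π` over a period. -/

open Real intervalIntegral

section PoissonIntegral

variable {A B r : ℝ}

lemma rotate_sq_add_sq (A B t : ℝ) :
    (B * cos t - A * sin t) ^ 2 + (B * sin t + A * cos t) ^ 2 = A ^ 2 + B ^ 2 := by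
  linear_combination (A ^ 2 + B ^ 2) * sin_sq_add_cos_sq t

lemma sq_add_mul_rotate_add_sq (r t : ℝ) :
    (A ^ 2 + B ^ 2 + r * (B * cos t - A * sin t)) ^ 2 + (r * (B * sin t + A * cos t)) ^ 2
      = (A ^ 2 + B ^ 2) * (A ^ 2 + B ^ 2 + 2 * r * (B * cos t - A * sin t) + r ^ 2) := by
  linear_combination r ^ 2 * rotate_sq_add_sq A B t

lemma add_mul_rotate_pos (hr : r ^ 2 < A ^ 2 + B ^ 2) (t : ℝ) :
    0 < A ^ 2 + B ^ 2 + r * (B * cos t - A * sin t) := by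
  have hR : 0 < A ^ 2 + B ^ 2 := (sq_nonneg r).trans_lt hr
  have hg : (B * cos t - A * sin t) ^ 2 ≤ A ^ 2 + B ^ 2 := by
    nlinarith [rotate_sq_add_sq A B t, sq_nonneg (B * sin t + A * cos t)]
  have hrg : (r * (B * cos t - A * sin t)) ^ 2 < (A ^ 2 + B ^ 2) ^ 2 := by
    calc (r * (B * cos t - A * sin t)) ^ 2
        = r ^ 2 * (B * cos t - A * sin t) ^ 2 := by ring
      _ ≤ r ^ 2 * (A ^ 2 + B ^ 2) := by gcongr
      _ < (A ^ 2 + B ^ 2) ^ 2 := by rw [sq (A ^ 2 + B ^ 2)]; gcongr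
  linarith [neg_abs_le (r * (B * cos t - A * sin t)), abs_lt_of_sq_lt_sq hrg hR.le]

lemma add_two_mul_rotate_add_sq_pos (hr : r ^ 2 < A ^ 2 + B ^ 2) (t : ℝ) :
    0 < A ^ 2 + B ^ 2 + 2 * r * (B * cos t - A * sin t) + r ^ 2 := by
  have hR : 0 < A ^ 2 + B ^ 2 := (sq_nonneg r).trans_lt hr
  refine pos_of_mul_pos_right ?_ hR.le
  rw [← sq_add_mul_rotate_add_sq]
  have := add_mul_rotate_pos hr t
  positivity

lemma continuous_poisson_mean (hr : r ^ 2 < A ^ 2 + B ^ 2) :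
    Continuous fun t => (A ^ 2 + B ^ 2 + r * (B * cos t - A * sin t)) /
      (A ^ 2 + B ^ 2 + 2 * r * (B * cos t - A * sin t) + r ^ 2) :=
  Continuous.div (by fun_prop) (by fun_prop) fun t => (add_two_mul_rotate_add_sq_pos hr t).ne'

lemma hasDerivAt_poisson_primitive (hr : r ^ 2 < A ^ 2 + B ^ 2) (t : ℝ) :
    HasDerivAt
      (fun s => s - arctan
        (r * (B * sin s + A * cos s) / (A ^ 2 + B ^ 2 + r * (B * cos s - A * sin s))))
      ((A ^ 2 + B ^ 2 + r * (B * cos t - A * sin t)) /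
        (A ^ 2 + B ^ 2 + 2 * r * (B * cos t - A * sin t) + r ^ 2)) t := by
  have hg : HasDerivAt (fun s => A ^ 2 + B ^ 2 + r * (B * cos s - A * sin s))
      (r * -(B * sin t + A * cos t)) t :=
    ((((hasDerivAt_cos t).const_mul B).sub ((hasDerivAt_sin t).const_mul A)).const_mul r
      |>.const_add (A ^ 2 + B ^ 2)).congr_deriv (by ring)
  have hh : HasDerivAt (fun s => r * (B * sin s + A * cos s)) (r * (B * cos t - A * sin t)) t :=
    ((((hasDerivAt_sin t).const_mul B).add ((hasDerivAt_cos t).const_mul A)).const_mul r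
      ).congr_deriv (by ring)
  refine ((hasDerivAt_id t).sub (hh.div hg (add_mul_rotate_pos hr t).ne').arctan).congr_deriv ?_
  have hR : A ^ 2 + B ^ 2 ≠ 0 := ((sq_nonneg r).trans_lt hr).ne'
  have hQ := (add_mul_rotate_pos hr t).ne'
  have hD := (add_two_mul_rotate_add_sq_pos hr t).ne'
  simp only [Pi.div_apply, div_pow, one_add_div (pow_ne_zero 2 hQ), sq_add_mul_rotate_add_sq]
  field_simp
  linear_combination -(A ^ 2 + B ^ 2) * r ^ 2 * sin_sq_add_cos_sq t

lemma integral_poisson_mean (hr : r ^ 2 < A ^ 2 + B ^ 2) :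
    ∫ t in (0 : ℝ)..2 * π, (A ^ 2 + B ^ 2 + r * (B * cos t - A * sin t)) /
      (A ^ 2 + B ^ 2 + 2 * r * (B * cos t - A * sin t) + r ^ 2) = 2 * π := by
  rw [integral_eq_sub_of_hasDerivAt (fun t _ => hasDerivAt_poisson_primitive hr t)
    ((continuous_poisson_mean hr).intervalIntegrable _ _)]
  simp

end PoissonIntegral

lemma sin_two_mul_sq_add_sq_eq (a b : ℝ) :
    sin (2 * a) ^ 2 + (2 * b - 1 + cos (2 * a)) ^ 2
      = (2 * (1 - b)) ^ 2 + 4 * (2 * b - 1) * cos a ^ 2 := by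
  linear_combination sin_sq_add_cos_sq (2 * a) + (4 * b - 2) * cos_two_mul a

theorem v_average_one_general (a b : ℝ)
    (ha : |a| < Real.pi / 2) (hbb : b > 1 / 2)
    (A B : ℝ) (hA : A = Real.sin (2 * a)) (hB : B = 2 * b - 1 + Real.cos (2 * a))
    (D v : ℝ → ℝ)
    (hD : ∀ t : ℝ, D t =
      A ^ 2 + B ^ 2 + 4 * (1 - b) * (B * Real.cos t - A * Real.sin t)
        + 4 * (1 - b) ^ 2)
    (hv : ∀ t : ℝ, v t = 1 / 2 + 2 * (2 * b - 1) * Real.cos a ^ 2 / D t) :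
    Continuous v ∧ (∀ t : ℝ, v (t + 2 * Real.pi) = v t) ∧
      (∫ t in (0:ℝ)..(2 * Real.pi), v t) = 2 * Real.pi := by
  have hcos : 0 < cos a := cos_pos_of_mem_Ioo (abs_lt.mp ha)
  have hAB : A ^ 2 + B ^ 2 = (2 * (1 - b)) ^ 2 + 4 * (2 * b - 1) * cos a ^ 2 := by
    rw [hA, hB, sin_two_mul_sq_add_sq_eq]
  have hr : (2 * (1 - b)) ^ 2 < A ^ 2 + B ^ 2 := by
    rw [hAB]
    exact lt_add_of_pos_right _ (mul_pos (by linarith) (pow_pos hcos 2))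
  have hv_eq : v = fun t => (A ^ 2 + B ^ 2 + 2 * (1 - b) * (B * cos t - A * sin t)) /
      (A ^ 2 + B ^ 2 + 2 * (2 * (1 - b)) * (B * cos t - A * sin t) + (2 * (1 - b)) ^ 2) := by
    ext t
    have hDt : D t = A ^ 2 + B ^ 2 + 2 * (2 * (1 - b)) * (B * cos t - A * sin t)
        + (2 * (1 - b)) ^ 2 := by
      rw [hD]; ring
    have hDt_ne := (add_two_mul_rotate_add_sq_pos hr t).ne'
    rw [hv, hDt, eq_div_iff hDt_ne, add_mul, div_mul_cancel₀ _ hDt_ne]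
    linear_combination -hAB / 2
  subst hv_eq
  refine ⟨continuous_poisson_mean hr, fun t => ?_, integral_poisson_mean hr⟩
  simp only [sin_add_two_pi, cos_add_two_pi]

/-- For `b > 1/2`, `b ≠ 1`: with `A = sin 2a`, `B = 2b - 1 + cos 2a`,
`D t = A² + B² + 4(1-b)(B cos t - A sin t) + 4(1-b)²` and
`v t = 1/2 + 2(2b-1) cos² a / D t`, the function `v` is continuous,
`2π`-periodic, and `∫₀^{2π} v = 2π`, i.e. the average of `v` over one period equals `1`. -/
theorem v_average_one (a b : ℝ)
    (ha : |a| < Real.pi / 2) (hb2 : b ≠ 1 / 2) (hb1 : b ≠ 1)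
    (hab : |a| + |b| > 0) (hbb : b > 1 / 2)
    (A B : ℝ) (hA : A = Real.sin (2 * a)) (hB : B = 2 * b - 1 + Real.cos (2 * a))
    (D v : ℝ → ℝ)
    (hD : ∀ t : ℝ, D t =
      A ^ 2 + B ^ 2 + 4 * (1 - b) * (B * Real.cos t - A * Real.sin t)
        + 4 * (1 - b) ^ 2)
    (hv : ∀ t : ℝ, v t = 1 / 2 + 2 * (2 * b - 1) * Real.cos a ^ 2 / D t) :
    Continuous v ∧ (∀ t : ℝ, v (t + 2 * Real.pi) = v t) ∧
      (∫ t in (0:ℝ)..(2 * Real.pi), v t) = 2 * Real.pi :=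
  v_average_one_general a b ha hbb A B hA hB D v hD hv
end
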